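/- In the one-way ACA simulation of a finite-state automaton, at most one cell is active in any reachable configuration, and consequently the automaton has invariant histories on the initial configuration encoding any input word. -/
import Mathlib


open scoped Classical

abbrev FsaState (Q σ : Type*) := (Q × Option σ) ⊕ σ

def fsaRule {Q σ : Type*} (δ : Q → σ → Q) :
    FsaState Q σ → FsaState Q σ → FsaState Q σ
  | Sum.inl (q, _), Sum.inr s' => Sum.inl (δ q s', some s')
  | _, y => y

def fsaInit {Q σ : Type*} (q0 : Q) (w : List σ) : ℤ → FsaState Q σ :=
  fun i =>
    if 1 ≤ i then
      match w[(i - 1).toNat]? with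
      | some s => Sum.inr s
      | none => Sum.inl (q0, none)
    else Sum.inl (q0, none)

/-- Apply a finite sequence of asynchronous update sets. -/
noncomputable def fsaRun {Q σ : Type*} (δ : Q → σ → Q) (l : List (Set ℤ))
    (c : ℤ → FsaState Q σ) : ℤ → FsaState Q σ :=
  l.foldl (fun c D => fun i =>
    if i ∈ D then fsaRule δ (c (i - 1)) (c i) else c i) c

noncomputable def fsaTraj {Q σ : Type*} (δ : Q → σ → Q) (ζ : ℕ → Set ℤ)
    (c0 : ℤ → FsaState Q σ) : ℕ → ℤ → FsaState Q σ
  | 0 => c0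
  | t + 1 => fun i =>
      if i ∈ ζ t then fsaRule δ (fsaTraj δ ζ c0 t (i - 1)) (fsaTraj δ ζ c0 t i)
      else fsaTraj δ ζ c0 t i

def fsaActive {Q σ : Type*} (δ : Q → σ → Q) (c : ℤ → FsaState Q σ) (i : ℤ) : Prop :=
  fsaRule δ (c (i - 1)) (c i) ≠ c i

/-- Predicate `p` holds at least `n` times. -/
def HasAtLeast (p : ℕ → Prop) (n : ℕ) : Prop :=
  {t | p t}.Infinite ∨ n < {t | p t}.ncard

/-- The `n`-th value of the deduplicated (update-history) sequence of `g`. -/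
noncomputable def histVal {S : Type*} (g : ℕ → S) : ℕ → S
  | 0 => g 0
  | n + 1 => g (Nat.nth (fun t => g (t + 1) ≠ g t) n + 1)

section Aux
variable {Q σ : Type*} (δ : Q → σ → Q) (q0 : Q) (w : List σ)

lemma fsaRule_inl_inr (q : Q) (o : Option σ) (s : σ) :
    fsaRule δ (Sum.inl (q, o)) (Sum.inr s) = Sum.inl (δ q s, some s) := rfl

lemma fsaRule_inl (x : FsaState Q σ) (p : Q × Option σ) :
    fsaRule δ x (Sum.inl p) = Sum.inl p := by
  rcases x with ⟨q, o⟩ | s <;> rfl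

lemma fsaRule_inr_left (s : σ) (y : FsaState Q σ) :
    fsaRule δ (Sum.inr s) y = y := by
  rcases y with ⟨q, o⟩ | s' <;> rfl

/-- The automaton state after reading `m` letters. -/
def fsaSt : ℕ → Q
  | 0 => q0
  | m + 1 =>
    match w[m]? with
    | some s => δ (fsaSt m) s
    | none => fsaSt m

/-- The canonical configuration after the first `k` letters have been consumed. -/
def fsaConf (k : ℕ) : ℤ → FsaState Q σ := fun i =>
  if 1 ≤ i then
    match w[(i - 1).toNat]? with
    | some s => if i ≤ (k : ℤ) then Sum.inl (fsaSt δ q0 w i.toNat, some s) else Sum.inr s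
    | none => Sum.inl (q0, none)
  else Sum.inl (q0, none)

lemma fsaConf_zero : fsaConf δ q0 w 0 = fsaInit q0 w := by
  funext i
  simp only [fsaConf, fsaInit]
  by_cases hi : 1 ≤ i
  · simp only [hi, if_true]
    cases hL : w[(i - 1).toNat]? with
    | none => rfl
    | some s => simp [show ¬ (i ≤ (0:ℤ)) by omega]
  · simp [hi]

end Aux
section Aux2
variable {Q σ : Type*} (δ : Q → σ → Q) (q0 : Q) (w : List σ)

lemma fsaConf_eq_inl {k : ℕ} {i : ℤ} (hi : 1 ≤ i) {s : σ}
    (hL : w[(i - 1).toNat]? = some s) (hik : i ≤ (k : ℤ)) :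
    fsaConf δ q0 w k i = Sum.inl (fsaSt δ q0 w i.toNat, some s) := by
  simp only [fsaConf, hi, if_true, hL, hik, if_true]

lemma fsaConf_eq_inr {k : ℕ} {i : ℤ} (hi : 1 ≤ i) {s : σ}
    (hL : w[(i - 1).toNat]? = some s) (hik : ¬ i ≤ (k : ℤ)) :
    fsaConf δ q0 w k i = Sum.inr s := by
  simp only [fsaConf, hi, if_true, hL, hik, if_false]

lemma fsaConf_eq_none {k : ℕ} {i : ℤ} (hi : 1 ≤ i)
    (hL : w[(i - 1).toNat]? = none) :
    fsaConf δ q0 w k i = Sum.inl (q0, none) := by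
  simp only [fsaConf, hi, if_true, hL]

lemma fsaConf_eq_left {k : ℕ} {i : ℤ} (hi : ¬ 1 ≤ i) :
    fsaConf δ q0 w k i = Sum.inl (q0, none) := by
  simp only [fsaConf, hi, if_false]

lemma fsaConf_isl {k : ℕ} {i : ℤ} (hik : i ≤ (k : ℤ)) :
    ∃ p, fsaConf δ q0 w k i = Sum.inl p := by
  by_cases hi : 1 ≤ i
  · cases hL : w[(i - 1).toNat]? with
    | none => exact ⟨_, fsaConf_eq_none δ q0 w hi hL⟩
    | some s => exact ⟨_, fsaConf_eq_inl δ q0 w hi hL hik⟩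
  · exact ⟨_, fsaConf_eq_left δ q0 w hi⟩

lemma mem_len {i : ℤ} {s : σ} (hL : w[(i - 1).toNat]? = some s) :
    (i - 1).toNat < w.length := (List.getElem?_eq_some_iff.mp hL).1

lemma getElem?_some {m : ℕ} (hm : m < w.length) : w[m]? = some w[m] :=
  List.getElem?_eq_some_iff.mpr ⟨hm, rfl⟩

/-- (A) Applying the rule everywhere to `fsaConf k` yields `fsaConf (k+1)`. -/
lemma fsaRule_conf (k : ℕ) (i : ℤ) :
    fsaRule δ (fsaConf δ q0 w k (i - 1)) (fsaConf δ q0 w k i) =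
      fsaConf δ q0 w (k + 1) i := by
  by_cases hi : 1 ≤ i
  · cases hL : w[(i - 1).toNat]? with
    | none =>
      rw [fsaConf_eq_none δ q0 w hi hL, fsaRule_inl, fsaConf_eq_none δ q0 w hi hL]
    | some s =>
      have hlen : (i - 1).toNat < w.length := mem_len w hL
      by_cases hik : i ≤ (k : ℤ)
      · rw [fsaConf_eq_inl δ q0 w hi hL hik, fsaRule_inl,
          fsaConf_eq_inl δ q0 w hi hL (show i ≤ ((k+1 : ℕ) : ℤ) by push_cast; omega)]
      · by_cases hik1 : i ≤ (k : ℤ) + 1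
        · have hieq : i = (k : ℤ) + 1 := by omega
          have hitoNat : i.toNat = k + 1 := by omega
          have hm : (i - 1).toNat = k := by omega
          have hwk : w[k]? = some s := by rw [← hm]; exact hL
          have hst : fsaSt δ q0 w (k + 1) = δ (fsaSt δ q0 w k) s := by
            simp [fsaSt, hwk]
          have h2 := fsaConf_eq_inr δ q0 w hi hL hik
          have h3 := fsaConf_eq_inl δ q0 w hi hL
            (show i ≤ ((k+1 : ℕ) : ℤ) by push_cast; omega)
          rcases Nat.eq_zero_or_pos k with hk0 | hkpos
          · subst hk0
            have h1 : fsaConf δ q0 w 0 (i - 1) = Sum.inl (q0, none) :=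
              fsaConf_eq_left δ q0 w (by omega)
            rw [h1, h2, fsaRule_inl_inr, h3, hitoNat, hst]
            rfl
          · have hk1 : (1:ℤ) ≤ i - 1 := by omega
            have hmm : (i - 1 - 1).toNat = k - 1 := by omega
            obtain ⟨s', hs'⟩ : ∃ s', w[(i - 1 - 1).toNat]? = some s' := by
              rw [hmm]; exact ⟨_, getElem?_some w (by omega)⟩
            have h1 := fsaConf_eq_inl δ q0 w hk1 hs' (show i - 1 ≤ (k:ℤ) by omega)
            rw [h1, h2, fsaRule_inl_inr, h3, hitoNat, hst]
            have : (i - 1).toNat = k := hm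
            rw [this]
        · -- i > k + 1
          have hk1 : (1:ℤ) ≤ i - 1 := by omega
          obtain ⟨s', hs'⟩ : ∃ s', w[(i - 1 - 1).toNat]? = some s' :=
            ⟨_, getElem?_some w (by omega)⟩
          rw [fsaConf_eq_inr δ q0 w hk1 hs' (show ¬ i - 1 ≤ (k:ℤ) by omega),
            fsaConf_eq_inr δ q0 w hi hL hik, fsaRule_inr_left,
            fsaConf_eq_inr δ q0 w hi hL (show ¬ i ≤ ((k+1:ℕ):ℤ) by push_cast; omega)]
  · rw [fsaConf_eq_left δ q0 w hi, fsaConf_eq_left δ q0 w hi, fsaRule_inl]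

/-- (C) `fsaConf (k+1)` agrees with `fsaConf k` away from cell `k+1`. -/
lemma fsaConf_succ_eq (k : ℕ) (i : ℤ) (h : i ≠ (k : ℤ) + 1 ∨ w.length ≤ k) :
    fsaConf δ q0 w (k + 1) i = fsaConf δ q0 w k i := by
  by_cases hi : 1 ≤ i
  · cases hL : w[(i - 1).toNat]? with
    | none => rw [fsaConf_eq_none δ q0 w hi hL, fsaConf_eq_none δ q0 w hi hL]
    | some s =>
      have hlen : (i - 1).toNat < w.length := mem_len w hL
      have hne : i ≠ (k : ℤ) + 1 := by
        rcases h with h | h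
        · exact h
        · intro he; omega
      by_cases hik : i ≤ (k : ℤ)
      · rw [fsaConf_eq_inl δ q0 w hi hL hik,
          fsaConf_eq_inl δ q0 w hi hL (show i ≤ ((k+1:ℕ):ℤ) by push_cast; omega)]
      · rw [fsaConf_eq_inr δ q0 w hi hL hik,
          fsaConf_eq_inr δ q0 w hi hL (show ¬ i ≤ ((k+1:ℕ):ℤ) by push_cast; omega)]
  · rw [fsaConf_eq_left δ q0 w hi, fsaConf_eq_left δ q0 w hi]

/-- (D) When `k < w.length`, cell `k+1` genuinely changes. -/
lemma fsaConf_succ_ne (k : ℕ) (hk : k < w.length) :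
    fsaConf δ q0 w (k + 1) ((k : ℤ) + 1) ≠ fsaConf δ q0 w k ((k : ℤ) + 1) := by
  have hm : (((k:ℤ) + 1) - 1).toNat = k := by omega
  have hwk : w[(((k:ℤ) + 1) - 1).toNat]? = some w[k] := by
    rw [hm]; exact getElem?_some w hk
  rw [fsaConf_eq_inl δ q0 w (by omega) hwk (show (k:ℤ)+1 ≤ ((k+1:ℕ):ℤ) by push_cast; omega),
    fsaConf_eq_inr δ q0 w (by omega) hwk (show ¬ (k:ℤ)+1 ≤ (k:ℤ) by omega)]
  simp

end Aux2
section Aux3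
variable {Q σ : Type*} (δ : Q → σ → Q) (q0 : Q) (w : List σ)

/-- One asynchronous step from `fsaConf k` with update set `D`. -/
lemma fsaStep_conf (D : Set ℤ) (k : ℕ) :
    (fun i => if i ∈ D then fsaRule δ (fsaConf δ q0 w k (i - 1)) (fsaConf δ q0 w k i)
        else fsaConf δ q0 w k i)
      = fsaConf δ q0 w (if ((k : ℤ) + 1) ∈ D ∧ k < w.length then k + 1 else k) := by
  funext i
  by_cases hc : ((k : ℤ) + 1) ∈ D ∧ k < w.length
  · rw [if_pos hc]
    by_cases hiD : i ∈ D
    · rw [if_pos hiD, fsaRule_conf]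
    · rw [if_neg hiD]
      refine (fsaConf_succ_eq δ q0 w k i (Or.inl ?_)).symm
      intro h; rw [h] at hiD; exact hiD hc.1
  · rw [if_neg hc]
    by_cases hiD : i ∈ D
    · rw [if_pos hiD, fsaRule_conf]
      apply fsaConf_succ_eq
      by_cases hk : k < w.length
      · left; intro h; exact hc ⟨h ▸ hiD, hk⟩
      · right; omega
    · rw [if_neg hiD]

/-- Counter for `fsaRun`. -/
noncomputable def runK (l : List (Set ℤ)) (k : ℕ) : ℕ :=
  l.foldl (fun k D => if ((k : ℤ) + 1) ∈ D ∧ k < w.length then k + 1 else k) k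

lemma runK_cons (D : Set ℤ) (l : List (Set ℤ)) (k : ℕ) :
    runK w (D :: l) k = runK w l (if ((k : ℤ) + 1) ∈ D ∧ k < w.length then k + 1 else k) :=
  rfl

lemma fsaRun_cons (D : Set ℤ) (l : List (Set ℤ)) (c : ℤ → FsaState Q σ) :
    fsaRun δ (D :: l) c
      = fsaRun δ l (fun i => if i ∈ D then fsaRule δ (c (i - 1)) (c i) else c i) := rfl

lemma fsaRun_conf (l : List (Set ℤ)) (k : ℕ) :
    fsaRun δ l (fsaConf δ q0 w k) = fsaConf δ q0 w (runK w l k) := by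
  induction l generalizing k with
  | nil => rfl
  | cons D l ih => rw [fsaRun_cons, fsaStep_conf, runK_cons, ih]

/-- Counter for `fsaTraj`. -/
noncomputable def trajK (ζ : ℕ → Set ℤ) : ℕ → ℕ
  | 0 => 0
  | t + 1 =>
    if ((trajK ζ t : ℤ) + 1) ∈ ζ t ∧ trajK ζ t < w.length then trajK ζ t + 1 else trajK ζ t

lemma trajK_succ (ζ : ℕ → Set ℤ) (t : ℕ) :
    trajK w ζ (t + 1)
      = if ((trajK w ζ t : ℤ) + 1) ∈ ζ t ∧ trajK w ζ t < w.length then trajK w ζ t + 1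
        else trajK w ζ t := by
  simp [trajK]

lemma fsaTraj_succ (ζ : ℕ → Set ℤ) (c0 : ℤ → FsaState Q σ) (t : ℕ) :
    fsaTraj δ ζ c0 (t + 1)
      = fun i => if i ∈ ζ t then fsaRule δ (fsaTraj δ ζ c0 t (i - 1)) (fsaTraj δ ζ c0 t i)
          else fsaTraj δ ζ c0 t i := rfl

lemma fsaTraj_conf (ζ : ℕ → Set ℤ) (t : ℕ) :
    fsaTraj δ ζ (fsaInit q0 w) t = fsaConf δ q0 w (trajK w ζ t) := by
  induction t with
  | zero => exact (fsaConf_zero δ q0 w).symm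
  | succ t ih => rw [fsaTraj_succ, ih, fsaStep_conf, trajK_succ]

lemma trajK_le_succ (ζ : ℕ → Set ℤ) (t : ℕ) :
    trajK w ζ t ≤ trajK w ζ (t + 1) ∧ trajK w ζ (t + 1) ≤ trajK w ζ t + 1 := by
  rw [trajK_succ]; split <;> omega

lemma trajK_mono (ζ : ℕ → Set ℤ) : Monotone (trajK w ζ) :=
  monotone_nat_of_le_succ fun t => (trajK_le_succ w ζ t).1

lemma trajK_le_len (ζ : ℕ → Set ℤ) (t : ℕ) : trajK w ζ t ≤ w.length := by
  induction t with
  | zero => exact Nat.zero_le _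
  | succ t ih => rw [trajK_succ]; split <;> omega

end Aux3
section Aux4
variable {Q σ : Type*} (δ : Q → σ → Q) (q0 : Q) (w : List σ)

lemma trajK_reach (ζ : ℕ → Set ℤ) (hζ : ∀ i : ℤ, {t | i ∈ ζ t}.Infinite) :
    ∀ m, m ≤ w.length → ∃ t, trajK w ζ t = m := by
  intro m
  induction m with
  | zero => exact fun _ => ⟨0, rfl⟩
  | succ m ih =>
    intro hm
    obtain ⟨t, ht⟩ := ih (by omega)
    have hP : ∃ s, t ≤ s ∧ ((m : ℤ) + 1) ∈ ζ s := by
      obtain ⟨s, hs, hts⟩ := (hζ ((m : ℤ) + 1)).exists_gt t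
      exact ⟨s, le_of_lt hts, hs⟩
    classical
    set s0 := Nat.find hP with hs0def
    have hs0 := Nat.find_spec hP
    have hstay : ∀ d, t + d ≤ s0 → trajK w ζ (t + d) = m := by
      intro d
      induction d with
      | zero => intro _; simpa using ht
      | succ d ihd =>
        intro hd
        have h1 : trajK w ζ (t + d) = m := ihd (by omega)
        have hnot : ¬ (t ≤ t + d ∧ ((m : ℤ) + 1) ∈ ζ (t + d)) :=
          Nat.find_min hP (by omega)
        have : ((m : ℤ) + 1) ∉ ζ (t + d) := fun hc => hnot ⟨by omega, hc⟩
        rw [show t + (d + 1) = (t + d) + 1 by omega, trajK_succ, h1]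
        rw [if_neg (fun hc => this hc.1)]
    have hks0 : trajK w ζ s0 = m := by
      have := hstay (s0 - t) (by omega)
      rwa [show t + (s0 - t) = s0 by omega] at this
    refine ⟨s0 + 1, ?_⟩
    rw [trajK_succ, hks0, if_pos ⟨hs0.2, by omega⟩]

/-- The potential-change times of cell `i` under schedule `ζ`. -/
def crossSet (ζ : ℕ → Set ℤ) (i : ℤ) : Set ℕ :=
  {t | trajK w ζ (t + 1) = trajK w ζ t + 1 ∧ i = (trajK w ζ t : ℤ) + 1}

lemma change_iff (ζ : ℕ → Set ℤ) (i : ℤ) (t : ℕ) :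
    fsaConf δ q0 w (trajK w ζ (t + 1)) i ≠ fsaConf δ q0 w (trajK w ζ t) i
      ↔ t ∈ crossSet w ζ i := by
  have hle := trajK_le_succ w ζ t
  rcases Nat.lt_or_ge (trajK w ζ t) (trajK w ζ (t + 1)) with hlt | hge
  · have heq : trajK w ζ (t + 1) = trajK w ζ t + 1 := by omega
    have hlen : trajK w ζ t < w.length := by
      by_contra hc
      rw [trajK_succ, if_neg (fun h => hc h.2)] at heq
      omega
    constructor
    · intro hne
      rw [heq] at hne
      refine ⟨heq, ?_⟩
      by_contra hi
      exact hne (fsaConf_succ_eq δ q0 w _ i (Or.inl hi))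
    · rintro ⟨-, hi⟩
      rw [heq, hi]
      exact fsaConf_succ_ne δ q0 w _ hlen
  · have heq : trajK w ζ (t + 1) = trajK w ζ t := by omega
    rw [heq]
    simp only [ne_eq, not_true_eq_false, false_iff, crossSet, Set.mem_setOf_eq]
    rintro ⟨h, -⟩
    omega

lemma crossSet_subsingleton (ζ : ℕ → Set ℤ) (i : ℤ) :
    (crossSet w ζ i).Subsingleton := by
  have key : ∀ t1 t2, t1 < t2 → t1 ∈ crossSet w ζ i → t2 ∈ crossSet w ζ i → False := by
    intro t1 t2 hlt h1 h2
    have e1 := h1.2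
    have e2 := h2.2
    have hk : trajK w ζ t1 = trajK w ζ t2 := by omega
    have := trajK_mono w ζ (show t1 + 1 ≤ t2 by omega)
    rw [h1.1, hk] at this
    omega
  intro t1 h1 t2 h2
  by_contra hne
  rcases Nat.lt_or_ge t1 t2 with h | h
  · exact key t1 t2 h h1 h2
  · exact key t2 t1 (by omega) h2 h1

lemma crossSet_nonempty_iff (ζ : ℕ → Set ℤ) (hζ : ∀ i : ℤ, {t | i ∈ ζ t}.Infinite)
    (i : ℤ) :
    (crossSet w ζ i).Nonempty ↔ ∃ m : ℕ, i = (m : ℤ) + 1 ∧ m < w.length := by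
  constructor
  · rintro ⟨t, ht1, ht2⟩
    refine ⟨trajK w ζ t, ht2, ?_⟩
    by_contra hc
    rw [trajK_succ, if_neg (fun h => hc h.2)] at ht1
    omega
  · rintro ⟨m, him, hm⟩
    obtain ⟨t', ht'⟩ := trajK_reach w ζ hζ (m + 1) (by omega)
    classical
    have hP : ∃ u, m + 1 ≤ trajK w ζ u := ⟨t', by omega⟩
    obtain ⟨u0, hu0, hmin⟩ : ∃ u0, (m + 1 ≤ trajK w ζ u0)
        ∧ ∀ v, v < u0 → ¬ (m + 1 ≤ trajK w ζ v) :=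
      ⟨Nat.find hP, Nat.find_spec hP, fun v hv => Nat.find_min hP hv⟩
    have hu0pos : 0 < u0 := by
      rcases Nat.eq_zero_or_pos u0 with h | h
      · subst h; simp [trajK] at hu0
      · exact h
    have hprev : trajK w ζ (u0 - 1) < m + 1 := by
      by_contra hc
      exact hmin (u0 - 1) (by omega) (by omega)
    have hle := trajK_le_succ w ζ (u0 - 1)
    rw [show u0 - 1 + 1 = u0 by omega] at hle
    have h1 : trajK w ζ (u0 - 1) = m := by omega
    have h2 : trajK w ζ u0 = m + 1 := by omega
    refine ⟨u0 - 1, ?_, ?_⟩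
    · rw [show u0 - 1 + 1 = u0 by omega, h1, h2]
    · rw [h1, him]

lemma crossSet_ncard (ζ : ℕ → Set ℤ) (hζ : ∀ i : ℤ, {t | i ∈ ζ t}.Infinite) (i : ℤ) :
    (crossSet w ζ i).ncard
      = if ∃ m : ℕ, i = (m : ℤ) + 1 ∧ m < w.length then 1 else 0 := by
  split
  case isTrue h =>
    obtain ⟨t, ht⟩ := (crossSet_nonempty_iff w ζ hζ i).mpr h
    rw [(crossSet_subsingleton w ζ i).eq_singleton_of_mem ht]
    simp
  case isFalse h =>
    have : crossSet w ζ i = ∅ := by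
      rw [Set.eq_empty_iff_forall_notMem]
      intro t ht
      exact h ((crossSet_nonempty_iff w ζ hζ i).mp ⟨t, ht⟩)
    simp [this]

end Aux4
/-- In the one-way ACA simulation of a finite-state automaton, every configuration
reachable from the initial configuration has at most one active cell, and consequently
the automaton has invariant histories on that initial configuration: each cell's
update history is independent of the fair schedule. -/
theorem oneway_fsa_sim_at_most_one_active {Q σ : Type*} [Finite Q] [Finite σ]
    (δ : Q → σ → Q) (q0 : Q) (w : List σ) :
    (∀ l : List (Set ℤ),
      {i | fsaActive δ (fsaRun δ l (fsaInit q0 w)) i}.Subsingleton) ∧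
    (∀ (ζ ζ' : ℕ → Set ℤ), (∀ i : ℤ, {t | i ∈ ζ t}.Infinite) →
      (∀ i : ℤ, {t | i ∈ ζ' t}.Infinite) → ∀ (i : ℤ) (n : ℕ),
      (HasAtLeast (fun t =>
          fsaTraj δ ζ (fsaInit q0 w) (t + 1) i ≠ fsaTraj δ ζ (fsaInit q0 w) t i) n ↔
        HasAtLeast (fun t =>
          fsaTraj δ ζ' (fsaInit q0 w) (t + 1) i ≠ fsaTraj δ ζ' (fsaInit q0 w) t i) n) ∧
      (HasAtLeast (fun t =>
          fsaTraj δ ζ (fsaInit q0 w) (t + 1) i ≠ fsaTraj δ ζ (fsaInit q0 w) t i) n →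
        histVal (fun t => fsaTraj δ ζ (fsaInit q0 w) t i) n =
          histVal (fun t => fsaTraj δ ζ' (fsaInit q0 w) t i) n)) := by
  constructor
  · -- at most one active cell
    intro l
    rw [← fsaConf_zero δ q0 w, fsaRun_conf]
    set k := runK w l 0 with hk
    have key : ∀ i : ℤ, fsaActive δ (fsaConf δ q0 w k) i → i = (k : ℤ) + 1 := by
      intro i hi
      have hne : fsaConf δ q0 w (k + 1) i ≠ fsaConf δ q0 w k i := by
        rw [← fsaRule_conf δ q0 w k i]
        exact hi
      by_contra hc
      exact hne (fsaConf_succ_eq δ q0 w k i (Or.inl hc))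
    intro i hi j hj
    rw [key i hi, key j hj]
  · -- invariant histories
    intro ζ ζ' hζ hζ' i n
    have hset : ∀ (ξ : ℕ → Set ℤ),
        {t | fsaTraj δ ξ (fsaInit q0 w) (t + 1) i ≠ fsaTraj δ ξ (fsaInit q0 w) t i}
          = crossSet w ξ i := by
      intro ξ
      ext t
      simp only [Set.mem_setOf_eq, fsaTraj_conf δ q0 w ξ]
      exact change_iff δ q0 w ξ i t
    have hfin : ∀ (ξ : ℕ → Set ℤ), (crossSet w ξ i).Finite :=
      fun ξ => (crossSet_subsingleton w ξ i).finite
    have hHAL : ∀ (ξ : ℕ → Set ℤ), (∀ j : ℤ, {t | j ∈ ξ t}.Infinite) →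
        (HasAtLeast (fun t =>
          fsaTraj δ ξ (fsaInit q0 w) (t + 1) i ≠ fsaTraj δ ξ (fsaInit q0 w) t i) n
          ↔ n < if ∃ m : ℕ, i = (m : ℤ) + 1 ∧ m < w.length then 1 else 0) := by
      intro ξ hξ
      unfold HasAtLeast
      rw [hset ξ, crossSet_ncard w ξ hξ i]
      constructor
      · rintro (h | h)
        · exact absurd h (hfin ξ).not_infinite
        · exact h
      · exact fun h => Or.inr h
    constructor
    · rw [hHAL ζ hζ, hHAL ζ' hζ']
    · intro h
      have hn : n = 0 := by
        have := (hHAL ζ hζ).mp h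
        split at this <;> omega
      subst hn
      rfl
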